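/- For every n ≥ 5, there is a Cayley graph Γ on Sym(n) with Cayley index 2 whose automorphism group contains a regular subgroup isomorphic to Alt(n) × ℤ₂. Explicitly, one may take the connection set T = {(1 2), (2 3), (2 4)} ∪ {(i i+1) : 4 ≤ i ≤ n−1}. -/

import Mathlib

/-!
Let `eₖ` be the transposition of the edge joining `k` to its parent in the tree with edges
`{0,1}, {1,2}, {1,3}, {3,4}, …, {n-2,n-1}`, and `c = (0 2)`. Right translations and conjugation by
`c` (which normalises `T`) are automorphisms of `Cay(Sym(n), T)`. The right regular representation
is a complement of the stabiliser of `1`, so the Cayley index is the order of that stabiliser, and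
it remains to show that an automorphism `ψ` fixing `1` is the identity or conjugation by `c`.

Since the tree has no triangles, two elements of `T` commute iff they have a common neighbour
other than `1`. Hence `ψ`, rebased at any vertex `g`, permutes `T` as an automorphism of the line
graph of the tree, which is rigid up to exchanging `e₁` and `e₂`: it acts on `T` as conjugation by
`1` or by `c`. Following the relations `e₁e₃e₁ = e₃e₁e₃`, `e₂e₃e₂ = e₃e₂e₃` and `e₁eₖ = eₖe₁`
(`k ≥ 4`) around the corresponding closed walks shows that this choice is the same at adjacent
vertices, and `T` generates `Sym(n)`.

The regular subgroup is `{x ↦ z * x * h⁻¹ | h ∈ Alt(n), z ∈ ⟨c⟩}`, as `⟨c⟩ ≅ ℤ₂` is a complement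
of `Alt(n)` normalising `T`.
-/

/-- The automorphism group of a digraph given by an adjacency relation. -/
def dAut {V : Type*} (adj : V → V → Prop) : Subgroup (Equiv.Perm V) where
  carrier := {σ | ∀ u v : V, adj (σ u) (σ v) ↔ adj u v}
  one_mem' := by intro u v; rfl
  mul_mem' := by
    intro a b ha hb u v
    simp only [Set.mem_setOf_eq] at *
    rw [Equiv.Perm.mul_apply, Equiv.Perm.mul_apply, ha, hb]
  inv_mem' := by
    intro a ha u v
    simpa using (ha (a⁻¹ u) (a⁻¹ v)).symm

/-- Adjacency of the Cayley digraph `Cay(G,S)`. -/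
def cayAdj (G : Type*) [Group G] (S : Set G) : G → G → Prop :=
  fun u v => v * u⁻¹ ∈ S

/-- The right regular representation of `G` in `Equiv.Perm G`. -/
def rightReg (G : Type*) [Group G] : G →* Equiv.Perm G where
  toFun g := Equiv.mulRight g⁻¹
  map_one' := by ext x; simp
  map_mul' := by intro a b; ext x; simp [mul_assoc]

/-- The right regular representation of `G` as a subgroup of `Aut(Cay(G,S))`. -/
def cayleyRR (G : Type*) [Group G] (S : Set G) :
    Subgroup (dAut (cayAdj G S)) :=
  ((rightReg G).range).subgroupOf (dAut (cayAdj G S))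

/-- A subgroup of `Equiv.Perm V` is regular if it is sharply transitive on `V`. -/
def IsRegularSub {V : Type*} (H : Subgroup (Equiv.Perm V)) : Prop :=
  ∀ v w : V, ∃! h : H, (h : Equiv.Perm V) v = w

/-- Adjacency of the cartesian product of two digraphs. -/
def cartAdj {α β : Type*} (adjG : α → α → Prop) (adjD : β → β → Prop) :
    α × β → α × β → Prop :=
  fun u v => (u.1 = v.1 ∧ adjD u.2 v.2) ∨ (u.2 = v.2 ∧ adjG u.1 v.1)

/-- `pathLe adj i u v` : there is a directed path of length at most `i` from `u` to `v`. -/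
def pathLe {V : Type*} (adj : V → V → Prop) : ℕ → V → V → Prop
  | 0, u, v => u = v
  | (n+1), u, v => pathLe adj n u v ∨ ∃ w, pathLe adj n u w ∧ adj w v


open Equiv Equiv.Perm MulAction Subgroup

section CayleyGraph

variable {G : Type*} [Group G] {S : Set G}

@[simp]
lemma rightReg_apply (g x : G) : rightReg G g x = x * g⁻¹ := rfl

lemma rightReg_mem_dAut (g : G) : rightReg G g ∈ dAut (cayAdj G S) := by
  intro u v
  simp [cayAdj, mul_assoc]

lemma mulLeft_mem_dAut {g : G} (hg : g ∈ normalizer S) :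
    Equiv.mulLeft g ∈ dAut (cayAdj G S) := by
  intro u v
  simp only [cayAdj, coe_mulLeft, mul_inv_rev, mem_set_normalizer_iff.mp hg (v * u⁻¹)]
  group

lemma conj_mem_dAut {g : G} (hg : g ∈ normalizer S) :
    (MulAut.conj g).toEquiv ∈ dAut (cayAdj G S) := by
  have : (MulAut.conj g).toEquiv = Equiv.mulLeft g * rightReg G g := by
    ext x
    simp [mul_assoc]
  rw [this]
  exact mul_mem (mulLeft_mem_dAut hg) (rightReg_mem_dAut g)

lemma apply_mem_of_mem_dAut {ψ : Perm G} (hψ : ψ ∈ dAut (cayAdj G S)) (h1 : ψ 1 = 1) {s : G}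
    (hs : s ∈ S) : ψ s ∈ S := by
  simpa [cayAdj, h1] using (hψ 1 s).mpr (by simpa [cayAdj] using hs)

lemma exists_mem_dAut_apply_eq {ψ : Perm G} (hψ : ψ ∈ dAut (cayAdj G S)) (g : G) :
    ∃ φ ∈ dAut (cayAdj G S), φ 1 = 1 ∧ ∀ x, φ x = ψ (x * g) * (ψ g)⁻¹ := by
  refine ⟨rightReg G (ψ g) * ψ * rightReg G g⁻¹,
    mul_mem (mul_mem (rightReg_mem_dAut _) hψ) (rightReg_mem_dAut _), ?_, fun x => ?_⟩ <;>
  simp only [Perm.mul_apply, rightReg_apply, inv_inv, one_mul, mul_inv_cancel]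

lemma index_cayleyRR_eq_card_stabilizer :
    (cayleyRR G S).index = Nat.card (stabilizer (dAut (cayAdj G S)) (1 : G)) := by
  refine (isComplement'_stabilizer (H := cayleyRR G S) (1 : G) ?_ ?_).symm.index_eq_card
  · rintro ⟨⟨φ, hφ⟩, hφR⟩ h1
    obtain ⟨g, rfl⟩ := mem_subgroupOf.mp hφR
    have hg : g = 1 := by simpa [Perm.smul_def] using h1
    subst hg
    ext x
    simp
  · intro φ
    refine ⟨⟨⟨rightReg G ((φ : Perm G) 1), rightReg_mem_dAut _⟩,
      mem_subgroupOf.mpr (MonoidHom.mem_range.mpr ⟨_, rfl⟩)⟩, ?_⟩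
    show rightReg G ((φ : Perm G) 1) ((φ : Perm G) 1) = 1
    simp

end CayleyGraph

section RegularSubgroup

variable {G : Type*} [Group G]

lemma isRegularSub_range {V M : Type*} [Group M] (F : M →* Perm V)
    (hF : ∀ v w, ∃! m, F m v = w) : IsRegularSub F.range := by
  intro v w
  obtain ⟨m, hm, huniq⟩ := hF v w
  refine ⟨⟨F m, m, rfl⟩, hm, ?_⟩
  rintro ⟨_, m', rfl⟩ hm'
  exact Subtype.ext (congrArg F (huniq m' hm'))

lemma injective_of_existsUnique {V M : Type*} [Group M] [Nonempty V] (F : M →* Perm V)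
    (hF : ∀ v w, ∃! m, F m v = w) : Function.Injective F := by
  intro m m' h
  obtain ⟨v⟩ := ‹Nonempty V›
  exact (hF v (F m v)).unique rfl (by rw [h])

def leftRightMul (H Z : Subgroup G) : H × Z →* Perm G where
  toFun p := Equiv.mulLeft (p.2 : G) * rightReg G p.1
  map_one' := by ext; simp
  map_mul' p q := by ext; simp [mul_assoc]

@[simp]
lemma leftRightMul_apply (H Z : Subgroup G) (p : H × Z) (x : G) :
    leftRightMul H Z p x = p.2 * (x * (p.1 : G)⁻¹) := rfl

/-- `z * v * h⁻¹ = w` says `w * v⁻¹ = z * (v * h⁻¹ * v⁻¹)`, a factorisation through `Z * H`. -/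
lemma leftRightMul_existsUnique {H Z : Subgroup G} [H.Normal] (hc : IsComplement' Z H)
    (v w : G) : ∃! p : H × Z, leftRightMul H Z p v = w := by
  obtain ⟨⟨z, h⟩, hzh, huniq⟩ := hc.existsUnique (w * v⁻¹)
  simp only at hzh huniq
  have hH : ∀ k : G, k ∈ H → v⁻¹ * k⁻¹ * v ∈ H := fun k hk => by
    simpa using ‹H.Normal›.conj_mem _ (inv_mem hk) v⁻¹
  refine ⟨(⟨v⁻¹ * (h : G)⁻¹ * v, hH h h.2⟩, z), ?_, ?_⟩
  · calc (z : G) * (v * (v⁻¹ * (h : G)⁻¹ * v)⁻¹) = z * h * v := by group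
      _ = w := by rw [hzh]; group
  · rintro ⟨h', z'⟩ hp
    simp only [leftRightMul_apply] at hp
    have hh' : v * (h' : G)⁻¹ * v⁻¹ ∈ H := by simpa using ‹H.Normal›.conj_mem _ (inv_mem h'.2) v
    have := huniq (z', ⟨_, hh'⟩) (by rw [← hp]; group)
    simp only [Prod.mk.injEq, Subtype.ext_iff] at this
    ext
    · show (h' : G) = v⁻¹ * (h : G)⁻¹ * v
      rw [← this.2]
      group
    · exact this.1

lemma leftRightMul_range_le {H Z : Subgroup G} {S : Set G} (hZ : Z ≤ normalizer S) :
    (leftRightMul H Z).range ≤ dAut (cayAdj G S) := by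
  rintro _ ⟨p, rfl⟩
  exact mul_mem (mulLeft_mem_dAut (hZ p.2.2)) (rightReg_mem_dAut _)

theorem exists_regular_le_dAut {H Z : Subgroup G} {S : Set G} [H.Normal]
    (hc : IsComplement' Z H) (hZ : Z ≤ normalizer S) :
    ∃ K : Subgroup (Perm G), K ≤ dAut (cayAdj G S) ∧ IsRegularSub K ∧ Nonempty (K ≃* H × Z) :=
  ⟨_, leftRightMul_range_le hZ, isRegularSub_range _ (leftRightMul_existsUnique hc),
    ⟨(MonoidHom.ofInjective
      (injective_of_existsUnique _ (leftRightMul_existsUnique hc))).symm⟩⟩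

end RegularSubgroup

section Swap

variable {α : Type*} [DecidableEq α]

lemma not_commute_swap_swap {a b c : α} (hab : a ≠ b) (hbc : b ≠ c) (hac : a ≠ c) :
    ¬Commute (swap a b) (swap b c) := by
  intro h
  have := congrArg (· c) h.eq
  simp only [Perm.mul_apply, swap_apply_right, swap_apply_of_ne_of_ne hac.symm hbc.symm] at this
  exact hab this

lemma exists_swap_eq_of_not_disjoint {x y z w : α} (hxy : x ≠ y) (hzw : z ≠ w)
    (h : ¬((x = z ∧ y = w) ∨ (x = w ∧ y = z) ∨ (x ≠ z ∧ x ≠ w ∧ y ≠ z ∧ y ≠ w))) :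
    ∃ a b c, a ≠ b ∧ b ≠ c ∧ a ≠ c ∧ swap x y = swap a b ∧ swap z w = swap b c := by
  by_cases hxz : x = z
  · subst hxz
    exact ⟨y, x, w, hxy.symm, hzw, fun h' => h (.inl ⟨rfl, h'⟩), swap_comm _ _, rfl⟩
  by_cases hxw : x = w
  · subst hxw
    exact ⟨y, x, z, hxy.symm, hzw.symm, fun h' => h (.inr (.inl ⟨rfl, h'⟩)), swap_comm _ _,
      swap_comm _ _⟩
  by_cases hyz : y = z
  · subst hyz
    exact ⟨x, y, w, hxy, hzw, fun h' => hxw h', rfl, rfl⟩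
  by_cases hyw : y = w
  · subst hyw
    exact ⟨x, y, z, hxy, hzw.symm, hxz, rfl, swap_comm _ _⟩
  exact absurd (.inr (.inr ⟨hxz, hxw, hyz, hyw⟩)) h

lemma commute_swap_swap_iff {x y z w : α} (hxy : x ≠ y) (hzw : z ≠ w) :
    Commute (swap x y) (swap z w) ↔
      (x = z ∧ y = w) ∨ (x = w ∧ y = z) ∨ (x ≠ z ∧ x ≠ w ∧ y ≠ z ∧ y ≠ w) := by
  refine ⟨fun h => ?_, ?_⟩
  · by_contra hne
    obtain ⟨a, b, c, hab, hbc, hac, h1, h2⟩ := exists_swap_eq_of_not_disjoint hxy hzw hne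
    rw [h1, h2] at h
    exact not_commute_swap_swap hab hbc hac h
  · rintro (⟨rfl, rfl⟩ | ⟨rfl, rfl⟩ | ⟨h1, h2, h3, h4⟩)
    · exact Commute.refl _
    · rw [swap_comm]
    · exact (disjoint_swap_swap (by simp [*, Ne.symm])).commute

lemma exists_swap_eq_of_not_commute {s t : Perm α} (hs : s.IsSwap) (ht : t.IsSwap)
    (h : ¬Commute s t) :
    ∃ a b c, a ≠ b ∧ b ≠ c ∧ a ≠ c ∧ s = swap a b ∧ t = swap b c := by
  obtain ⟨x, y, hxy, rfl⟩ := hs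
  obtain ⟨z, w, hzw, rfl⟩ := ht
  exact exists_swap_eq_of_not_disjoint hxy hzw (mt (commute_swap_swap_iff hxy hzw).mpr h)

/-- If `z ∉ {a, b, c}`, involutivity of the product forces `w` to be fixed by the 3-cycle
`swap a b * swap b c`, and then the product still maps `a ↦ b ↦ c`. -/
lemma mem_of_swap_mul_swap_mul_swap_eq {a b c z w : α} {q : Perm α} (hab : a ≠ b) (hbc : b ≠ c)
    (hac : a ≠ c) (hq : q * q = 1) (h : swap z w * swap a b * swap b c = q) :
    z = a ∨ z = b ∨ z = c := by
  by_contra hz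
  simp only [not_or] at hz
  obtain ⟨hza, hzb, hzc⟩ := hz
  have hq_apply : ∀ x, q x = swap z w (swap a b (swap b c x)) := fun x => by rw [← h]; rfl
  have hqz : q z = w := by
    rw [hq_apply, swap_apply_of_ne_of_ne hzb hzc, swap_apply_of_ne_of_ne hza hzb,
      swap_apply_left]
  have hqw : q w = z := by rw [← hqz, ← Perm.mul_apply, hq, Perm.one_apply]
  have hw : swap a b (swap b c w) = w := by
    rw [hq_apply, swap_apply_eq_iff, swap_apply_left] at hqw
    exact hqw
  have hwa : w ≠ a := by
    rintro rfl
    rw [swap_apply_of_ne_of_ne hab hac, swap_apply_left] at hw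
    exact hab hw.symm
  have hwb : w ≠ b := by
    rintro rfl
    rw [swap_apply_left, swap_apply_of_ne_of_ne hac.symm hbc.symm] at hw
    exact hbc hw.symm
  have hwc : w ≠ c := by
    rintro rfl
    rw [swap_apply_right, swap_apply_right] at hw
    exact hac hw
  have hqa : q a = b := by
    rw [hq_apply, swap_apply_of_ne_of_ne hab hac, swap_apply_left,
      swap_apply_of_ne_of_ne (Ne.symm hzb) (Ne.symm hwb)]
  have hqb : q b = c := by
    rw [hq_apply, swap_apply_left, swap_apply_of_ne_of_ne hac.symm hbc.symm,
      swap_apply_of_ne_of_ne (Ne.symm hzc) (Ne.symm hwc)]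
  have := congrArg (· a) hq
  simp only [Perm.mul_apply, hqa, hqb, Perm.one_apply] at this
  exact hac this.symm

lemma eq_of_mul_swap_eq_mul_swap {T : Set (Perm α)} (hT : ∀ u ∈ T, u.IsSwap) {a b c : α}
    (hab : a ≠ b) (hbc : b ≠ c) (hac : a ≠ c) (hacT : swap a c ∉ T) {p q : Perm α}
    (hp : p ∈ T) (hq : q ∈ T) (h : p * swap a b = q * swap b c) : p = swap a b := by
  have hpq : p * swap a b * swap b c = q := by rw [h, mul_assoc, swap_mul_self, mul_one]
  have hqq : q * q = 1 := by
    obtain ⟨x, y, -, rfl⟩ := hT q hq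
    exact swap_mul_self x y
  obtain ⟨z, w, hzw, rfl⟩ := hT p hp
  have hz := mem_of_swap_mul_swap_mul_swap_eq hab hbc hac hqq hpq
  have hw := mem_of_swap_mul_swap_mul_swap_eq (z := w) (w := z) hab hbc hac hqq
    (by rwa [swap_comm w z])
  have hbca : swap b c * swap a b * swap b c = swap c a := swap_mul_swap_mul_swap hab hac
  rcases hz with hz | hz | hz <;> rcases hw with hw | hw | hw <;> subst z w
  all_goals first | exact absurd rfl hzw | rfl | exact swap_comm _ _ | skip
  · exact absurd hp hacT
  · rw [hbca] at hpq
    subst hpq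
    rw [swap_comm] at hq
    exact absurd hq hacT
  · rw [swap_comm] at hp
    exact absurd hp hacT
  · rw [swap_comm c b, hbca] at hpq
    subst hpq
    rw [swap_comm] at hq
    exact absurd hq hacT

end Swap

section TranspositionCayleyGraph

variable {α : Type*} [DecidableEq α] {T : Set (Perm α)}

lemma swap_notMem_of_bipartite (χ : α → Prop) (hχ : ∀ u ∈ T, ∀ x, u x ≠ x → (χ (u x) ↔ ¬χ x))
    {a b c : α} (hab : a ≠ b) (hbc : b ≠ c) (hac : a ≠ c) (h1 : swap a b ∈ T)
    (h2 : swap b c ∈ T) : swap a c ∉ T := by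
  intro h3
  have e1 := hχ _ h1 a (by simpa using hab.symm)
  have e2 := hχ _ h2 b (by simpa using hbc.symm)
  have e3 := hχ _ h3 a (by simpa using hac.symm)
  simp only [swap_apply_left] at e1 e2 e3
  tauto

variable (hT : ∀ u ∈ T, u.IsSwap) (χ : α → Prop) (hχ : ∀ u ∈ T, ∀ x, u x ≠ x → (χ (u x) ↔ ¬χ x))
include hT hχ

/-- Commuting `s ≠ t` in `T` have the common neighbour `t * s ≠ 1`; non-commuting ones have no
common neighbour but `1`, since the transposition graph of `T` (2-coloured by `χ`) has no
triangles. -/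
lemma commute_apply_of_commute {ψ : Perm (Perm α)} (hψ : ψ ∈ dAut (cayAdj (Perm α) T))
    (h1 : ψ 1 = 1) {s t : Perm α} (hs : s ∈ T) (ht : t ∈ T) (hst : Commute s t) :
    Commute (ψ s) (ψ t) := by
  by_contra hne
  obtain ⟨a, b, c, hab, hbc, hac, hsa, htb⟩ := exists_swap_eq_of_not_commute
    (hT _ (apply_mem_of_mem_dAut hψ h1 hs)) (hT _ (apply_mem_of_mem_dAut hψ h1 ht)) hne
  have hp : ψ (t * s) * (ψ s)⁻¹ ∈ T := (hψ s (t * s)).mpr (by simpa [cayAdj] using ht)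
  have hq : ψ (t * s) * (ψ t)⁻¹ ∈ T :=
    (hψ t (t * s)).mpr (by rwa [cayAdj, ← hst.eq, mul_inv_cancel_right])
  have key := eq_of_mul_swap_eq_mul_swap hT hab hbc hac
    (swap_notMem_of_bipartite χ hχ hab hbc hac (hsa ▸ apply_mem_of_mem_dAut hψ h1 hs)
      (htb ▸ apply_mem_of_mem_dAut hψ h1 ht)) hp hq (by rw [← hsa, ← htb]; group)
  rw [← hsa, mul_inv_eq_iff_eq_mul] at key
  obtain ⟨x, y, -, hxy⟩ := hT s hs
  have hts : t * s = 1 := by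
    apply ψ.injective
    rw [key, h1, hsa, swap_mul_self]
  have hts' : t = s := by rw [eq_inv_of_mul_eq_one_left hts, hxy, swap_inv]
  exact hne (hts' ▸ Commute.refl _)

lemma commute_apply_iff {ψ : Perm (Perm α)} (hψ : ψ ∈ dAut (cayAdj (Perm α) T)) (h1 : ψ 1 = 1)
    {s t : Perm α} (hs : s ∈ T) (ht : t ∈ T) : Commute (ψ s) (ψ t) ↔ Commute s t := by
  refine ⟨fun h => ?_, commute_apply_of_commute hT χ hχ hψ h1 hs ht⟩
  have hψ' := inv_mem hψ
  have h1' : ψ⁻¹ 1 = 1 := by rw [Perm.inv_eq_iff_eq, h1]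
  simpa using commute_apply_of_commute hT χ hχ hψ' h1' (apply_mem_of_mem_dAut hψ h1 hs)
    (apply_mem_of_mem_dAut hψ h1 ht) h

end TranspositionCayleyGraph

section Tree

/-- The tree on `{0, …, n-1}` with edges `{0,1}, {1,2}, {1,3}, {3,4}, {4,5}, …`: each vertex
`k ≥ 1` is joined to `treeParent k`, so edges are indexed by `Set.Ico 1 n`. -/
def treeParent (k : ℕ) : ℕ := if k = 3 then 1 else k - 1

def treeDepth (k : ℕ) : ℕ := if k ≤ 2 then k else k - 1

/-- The transposition `(i j)` in `Sym(n)`; the identity when `i` or `j` is out of range. -/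
def swapNat (n i j : ℕ) : Perm (Fin n) := if h : i < n ∧ j < n then swap ⟨i, h.1⟩ ⟨j, h.2⟩ else 1

def treeSwap (n k : ℕ) : Perm (Fin n) := swapNat n (treeParent k) k

def treeSwaps (n : ℕ) : Set (Perm (Fin n)) := treeSwap n '' Set.Ico 1 n

/-- The edges `k` and `l` of the tree share a vertex. -/
def treeAdj (k l : ℕ) : Prop := l = k + 1 ∨ k = l + 1 ∨ (k = 1 ∧ l = 3) ∨ (k = 3 ∧ l = 1)

/-- Conjugation by `twist n true = (0 2)` is the automorphism of the tree exchanging `0` and `2`. -/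
def twist (n : ℕ) (b : Bool) : Perm (Fin n) := if b then swapNat n 0 2 else 1

lemma treeParent_cases (k : ℕ) :
    (k = 3 ∧ treeParent k = 1) ∨ (k ≠ 3 ∧ treeParent k = k - 1) := by
  unfold treeParent
  split_ifs <;> omega

lemma treeParent_le (k : ℕ) : treeParent k ≤ k := by
  have := treeParent_cases k
  omega

lemma treeParent_lt {k : ℕ} (hk : 1 ≤ k) : treeParent k < k := by
  have := treeParent_cases k
  omega

lemma swapNat_eq {n i j : ℕ} (hi : i < n) (hj : j < n) :
    swapNat n i j = swap ⟨i, hi⟩ ⟨j, hj⟩ :=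
  dif_pos ⟨hi, hj⟩

lemma treeSwap_eq {n k : ℕ} (hk : k < n) :
    treeSwap n k = swap ⟨treeParent k, (treeParent_le k).trans_lt hk⟩ ⟨k, hk⟩ :=
  swapNat_eq _ _

lemma treeSwap_isSwap {n k : ℕ} (hk : k ∈ Set.Ico 1 n) : (treeSwap n k).IsSwap :=
  ⟨_, _, by simpa [Fin.ext_iff] using (treeParent_lt hk.1).ne, treeSwap_eq hk.2⟩

lemma treeSwap_injOn {n : ℕ} : Set.InjOn (treeSwap n) (Set.Ico 1 n) := by
  intro k hk l hl h
  have hkk := congrArg (fun σ : Perm (Fin n) => (σ ⟨k, hk.2⟩ : ℕ)) h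
  simp only [treeSwap_eq hk.2, treeSwap_eq hl.2, swap_apply_right, swap_apply_def,
    Fin.ext_iff] at hkk
  have := treeParent_lt hk.1
  have := treeParent_lt hl.1
  split_ifs at hkk <;> simp only at hkk <;> omega

lemma commute_treeSwap_iff {n k l : ℕ} (hk : k ∈ Set.Ico 1 n) (hl : l ∈ Set.Ico 1 n) :
    Commute (treeSwap n k) (treeSwap n l) ↔ ¬treeAdj k l := by
  rw [treeSwap_eq hk.2, treeSwap_eq hl.2, commute_swap_swap_iff
    (by simpa [Fin.ext_iff] using (treeParent_lt hk.1).ne)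
    (by simpa [Fin.ext_iff] using (treeParent_lt hl.1).ne)]
  simp only [ne_eq, Fin.ext_iff, treeAdj]
  have := treeParent_cases k
  have := treeParent_cases l
  omega

lemma treeSwaps_bipartite {n : ℕ} : ∀ u ∈ treeSwaps n, ∀ x : Fin n, u x ≠ x →
    (treeDepth (u x) % 2 = 1 ↔ ¬treeDepth x % 2 = 1) := by
  rintro _ ⟨k, hk, rfl⟩ x hx
  rw [treeSwap_eq hk.2, swap_apply_ne_self_iff] at hx
  rw [treeSwap_eq hk.2]
  have := treeParent_cases k
  have := hk.1
  rcases hx.2 with rfl | rfl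
  · simp only [swap_apply_left, treeDepth, Fin.val_mk]
    split_ifs <;> omega
  · simp only [swap_apply_right, treeDepth, Fin.val_mk]
    split_ifs <;> omega

lemma mem_orbit_treeSwaps {n k : ℕ} (hk : k < n) :
    (⟨k, hk⟩ : Fin n) ∈ orbit (closure (treeSwaps n)) (⟨0, by omega⟩ : Fin n) := by
  induction k using Nat.strong_induction_on with
  | _ k ih =>
    rcases Nat.eq_zero_or_pos k with rfl | hk0
    · exact mem_orbit_self _
    · have hp := ih (treeParent k) (treeParent_lt hk0) ((treeParent_le k).trans_lt hk)
      convert mem_orbit_of_mem_orbit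
        (⟨treeSwap n k, subset_closure ⟨k, ⟨hk0, hk⟩, rfl⟩⟩ : closure (treeSwaps n)) hp
      simp [Perm.smul_def, treeSwap_eq hk]

lemma closure_treeSwaps (n : ℕ) : closure (treeSwaps n) = ⊤ := by
  have : IsPretransitive (closure (treeSwaps n)) (Fin n) := by
    refine ⟨fun x y => ?_⟩
    obtain ⟨g, hg⟩ := mem_orbit_treeSwaps x.2
    obtain ⟨h, hh⟩ := mem_orbit_treeSwaps (n := n) y.2
    simp only [Fin.eta] at hg hh
    exact ⟨h * g⁻¹, by rw [← hg, ← hh, smul_smul, inv_mul_cancel_right]⟩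
  exact closure_of_isSwap_of_isPretransitive fun _ ⟨k, hk, hσ⟩ => hσ ▸ treeSwap_isSwap hk

end Tree

section Twist

lemma viaEmbeddingHom_castLE_swapNat {m n i j : ℕ} (hmn : m ≤ n) (hi : i < m) (hj : j < m) :
    Perm.viaEmbeddingHom (Fin.castLEEmb hmn) (swapNat m i j) = swapNat n i j := by
  rw [swapNat_eq hi hj, swapNat_eq (hi.trans_le hmn) (hj.trans_le hmn), viaEmbeddingHom_apply]
  ext x : 1
  by_cases hx : x ∈ Set.range (Fin.castLEEmb hmn)
  · obtain ⟨y, rfl⟩ := hx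
    rw [viaEmbedding_apply]
    exact ((Fin.castLEEmb hmn).injective.swap_apply ⟨i, hi⟩ ⟨j, hj⟩ y).symm
  · rw [viaEmbedding_apply_of_notMem _ _ _ hx, swap_apply_of_ne_of_ne]
    · exact fun h => hx ⟨⟨i, hi⟩, by rw [h]; rfl⟩
    · exact fun h => hx ⟨⟨j, hj⟩, by rw [h]; rfl⟩

variable {n : ℕ}

/-- Everything about `twist` and the three edges at the branch vertex `1` happens on
`{0, 1, 2, 3}`, so it can be checked by computation in `Sym(4)` and transported. -/
lemma viaEmbeddingHom_castLE_treeSwap (hn : 4 ≤ n) {k : ℕ} (hk : k < 4) :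
    Perm.viaEmbeddingHom (Fin.castLEEmb hn) (treeSwap 4 k) = treeSwap n k :=
  viaEmbeddingHom_castLE_swapNat hn ((treeParent_le k).trans_lt hk) hk

lemma viaEmbeddingHom_castLE_twist (hn : 4 ≤ n) (b : Bool) :
    Perm.viaEmbeddingHom (Fin.castLEEmb hn) (twist 4 b) = twist n b := by
  cases b
  · simp only [twist, Bool.false_eq_true, if_false, map_one]
  · simp only [twist, if_true]
    exact viaEmbeddingHom_castLE_swapNat hn (by norm_num) (by norm_num)

lemma commute_twist_treeSwap (b : Bool) {k : ℕ} (hk : 4 ≤ k) (hkn : k < n) :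
    Commute (twist n b) (treeSwap n k) := by
  cases b
  · exact Commute.one_left _
  · rw [twist, if_pos rfl, swapNat_eq (by omega) (by omega), treeSwap_eq hkn,
      commute_swap_swap_iff (by simp [Fin.ext_iff])
        (by simpa [Fin.ext_iff] using (treeParent_lt (by omega : 1 ≤ k)).ne)]
    have := treeParent_cases k
    simp only [ne_eq, Fin.ext_iff]
    omega

lemma twist_mul_treeSwap_mul_twist (hn : 4 ≤ n) (b : Bool) {k : ℕ} (hk : k ∈ Set.Ico 1 n) :
    twist n b * treeSwap n k * twist n b = treeSwap n (if b then swap 1 2 k else k) := by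
  cases b
  · simp only [twist, Bool.false_eq_true, if_false, one_mul, mul_one]
  obtain ⟨hk1, hkn⟩ := hk
  rw [if_pos rfl]
  by_cases hk4 : k < 4
  · have key : ∀ k ∈ Finset.Ico 1 4,
        twist 4 true * treeSwap 4 k * twist 4 true = treeSwap 4 (swap 1 2 k) := by decide
    have hk' : swap 1 2 k < 4 := by
      rw [swap_apply_def]
      split_ifs <;> omega
    rw [← viaEmbeddingHom_castLE_twist hn, ← viaEmbeddingHom_castLE_treeSwap hn hk4,
      ← viaEmbeddingHom_castLE_treeSwap hn hk', ← map_mul, ← map_mul,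
      key k (Finset.mem_Ico.mpr ⟨hk1, hk4⟩)]
  · rw [(commute_twist_treeSwap true (by omega) hkn).eq, mul_assoc, twist, if_pos rfl,
      swapNat_eq (by omega) (by omega), swap_mul_self, mul_one,
      swap_apply_of_ne_of_ne (by omega) (by omega)]

lemma treeSwap_braid (hn : 4 ≤ n) {x : ℕ} (hx : x = 1 ∨ x = 2) :
    treeSwap n x * treeSwap n 3 * treeSwap n x = treeSwap n 3 * treeSwap n x * treeSwap n 3 := by
  have key : ∀ x ∈ ({1, 2} : Finset ℕ), treeSwap 4 x * treeSwap 4 3 * treeSwap 4 x =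
      treeSwap 4 3 * treeSwap 4 x * treeSwap 4 3 := by decide
  have hx4 : x < 4 := by omega
  simpa only [map_mul, viaEmbeddingHom_castLE_treeSwap hn hx4,
    viaEmbeddingHom_castLE_treeSwap hn (by norm_num : 3 < 4)] using
    congrArg (Perm.viaEmbeddingHom (Fin.castLEEmb hn))
      (key x (by rcases hx with rfl | rfl <;> simp))

lemma twist_eq_of_hexagon (hn : 4 ≤ n) {x : ℕ} (hx : x = 1 ∨ x = 2) {a b d : Bool}
    (h : twist n a * treeSwap n x * twist n a * treeSwap n 3 *
        (twist n b * treeSwap n x * twist n b) =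
      treeSwap n 3 * (twist n d * treeSwap n x * twist n d) * treeSwap n 3) :
    a = b ∧ b = d := by
  have key : ∀ x ∈ ({1, 2} : Finset ℕ), ∀ a b d : Bool,
      twist 4 a * treeSwap 4 x * twist 4 a * treeSwap 4 3 * (twist 4 b * treeSwap 4 x * twist 4 b)
        = treeSwap 4 3 * (twist 4 d * treeSwap 4 x * twist 4 d) * treeSwap 4 3 →
      a = b ∧ b = d := by decide
  have hx4 : x < 4 := by omega
  refine key x (by rcases hx with rfl | rfl <;> simp) a b d
    (viaEmbeddingHom_injective (Fin.castLEEmb hn) ?_)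
  simpa only [map_mul, viaEmbeddingHom_castLE_treeSwap hn hx4, viaEmbeddingHom_castLE_twist hn,
    viaEmbeddingHom_castLE_treeSwap hn (by norm_num : 3 < 4)] using h

lemma twist_eq_of_conj_treeSwap_one_eq (hn : 4 ≤ n) {a b : Bool}
    (h : twist n a * treeSwap n 1 * twist n a = twist n b * treeSwap n 1 * twist n b) : a = b := by
  have key : ∀ a b : Bool,
      twist 4 a * treeSwap 4 1 * twist 4 a = twist 4 b * treeSwap 4 1 * twist 4 b → a = b := by
    decide
  refine key a b (viaEmbeddingHom_injective (Fin.castLEEmb hn) ?_)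
  simpa only [map_mul, viaEmbeddingHom_castLE_treeSwap hn (by norm_num : 1 < 4),
    viaEmbeddingHom_castLE_twist hn] using h

end Twist

lemma treeAdj_rigid_branch {n : ℕ} (hn : 5 ≤ n) {f : ℕ → ℕ}
    (hf : Set.MapsTo f (Set.Ico 1 n) (Set.Ico 1 n)) (hinj : Set.InjOn f (Set.Ico 1 n))
    (hadj : ∀ k ∈ Set.Ico 1 n, ∀ l ∈ Set.Ico 1 n, treeAdj (f k) (f l) ↔ treeAdj k l) :
    f 3 = 3 ∧ f 4 = 4 ∧ ((f 1 = 1 ∧ f 2 = 2) ∨ (f 1 = 2 ∧ f 2 = 1)) := by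
  have i1 : 1 ∈ Set.Ico 1 n := ⟨le_rfl, by omega⟩
  have i2 : 2 ∈ Set.Ico 1 n := ⟨by omega, by omega⟩
  have i3 : 3 ∈ Set.Ico 1 n := ⟨by omega, by omega⟩
  have i4 : 4 ∈ Set.Ico 1 n := ⟨by omega, by omega⟩
  have a12 := (hadj 1 i1 2 i2).2 (by simp [treeAdj])
  have a13 := (hadj 1 i1 3 i3).2 (by simp [treeAdj])
  have a23 := (hadj 2 i2 3 i3).2 (by simp [treeAdj])
  have a34 := (hadj 3 i3 4 i4).2 (by simp [treeAdj])
  have n12 : f 1 ≠ f 2 := fun h => absurd (hinj i1 i2 h) (by norm_num)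
  have n13 : f 1 ≠ f 3 := fun h => absurd (hinj i1 i3 h) (by norm_num)
  have n23 : f 2 ≠ f 3 := fun h => absurd (hinj i2 i3 h) (by norm_num)
  have n14 : f 1 ≠ f 4 := fun h => absurd (hinj i1 i4 h) (by norm_num)
  have n24 : f 2 ≠ f 4 := fun h => absurd (hinj i2 i4 h) (by norm_num)
  have n34 : f 3 ≠ f 4 := fun h => absurd (hinj i3 i4 h) (by norm_num)
  have r1 := Set.mem_Ico.mp (hf i1)
  have r2 := Set.mem_Ico.mp (hf i2)
  have r3 := Set.mem_Ico.mp (hf i3)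
  have r4 := Set.mem_Ico.mp (hf i4)
  unfold treeAdj at a12 a13 a23 a34
  -- `1, 2, 3` is the only triangle, and only `3` has a further neighbour
  have : f 1 ≤ 3 ∧ f 2 ≤ 3 ∧ f 3 ≤ 3 := by omega
  omega

lemma treeAdj_rigid {n : ℕ} (hn : 5 ≤ n) {f : ℕ → ℕ}
    (hf : Set.MapsTo f (Set.Ico 1 n) (Set.Ico 1 n)) (hinj : Set.InjOn f (Set.Ico 1 n))
    (hadj : ∀ k ∈ Set.Ico 1 n, ∀ l ∈ Set.Ico 1 n, treeAdj (f k) (f l) ↔ treeAdj k l) :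
    (∀ k ∈ Set.Ico 1 n, f k = k) ∨ (∀ k ∈ Set.Ico 1 n, f k = swap 1 2 k) := by
  obtain ⟨h3, h4, h12⟩ := treeAdj_rigid_branch hn hf hinj hadj
  -- along the path `3, 4, 5, …` each edge is pinned down by its two predecessors
  have path : ∀ k, 3 ≤ k → k < n → f k = k := by
    intro k
    induction k using Nat.strong_induction_on with
    | _ k ih =>
      intro hk3 hkn
      rcases (show k = 3 ∨ k = 4 ∨ 5 ≤ k by omega) with rfl | rfl | hk5
      · exact h3
      · exact h4
      have hadj' := (hadj (k - 1) ⟨by omega, by omega⟩ k ⟨by omega, hkn⟩).2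
        (by unfold treeAdj; omega)
      have hne : f (k - 2) ≠ f k := fun h =>
        absurd (hinj ⟨by omega, by omega⟩ ⟨by omega, hkn⟩ h) (by omega)
      rw [ih (k - 1) (by omega) (by omega) (by omega)] at hadj'
      rw [ih (k - 2) (by omega) (by omega) (by omega)] at hne
      unfold treeAdj at hadj'
      omega
  rcases h12 with ⟨h1, h2⟩ | ⟨h1, h2⟩
  · left
    rintro k ⟨hk1, hkn⟩
    rcases (show k = 1 ∨ k = 2 ∨ 3 ≤ k by omega) with rfl | rfl | hk3
    exacts [h1, h2, path k hk3 hkn]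
  · right
    rintro k ⟨hk1, hkn⟩
    rcases (show k = 1 ∨ k = 2 ∨ 3 ≤ k by omega) with rfl | rfl | hk3
    · simpa using h1
    · simpa using h2
    · rw [path k hk3 hkn, swap_apply_of_ne_of_ne (by omega) (by omega)]

lemma isComplement'_zpowers_alternatingGroup {α : Type*} [Fintype α] [DecidableEq α]
    {σ : Perm α} (hσ : σ.IsSwap) : IsComplement' (zpowers σ) (alternatingGroup α) := by
  have : Nontrivial α := by
    obtain ⟨x, y, hxy, -⟩ := hσ
    exact ⟨⟨x, y, hxy⟩⟩
  refine isComplement'_of_card_mul_and_disjoint ?_ (disjoint_def.mpr ?_)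
  · rw [Nat.card_zpowers, hσ.orderOf, Nat.card_eq_fintype_card, Nat.card_eq_fintype_card,
      two_mul_card_alternatingGroup]
  · rintro _ ⟨k, rfl⟩ hk
    have hσ2 : σ ^ (2 : ℤ) = 1 := by
      rw [zpow_ofNat, ← hσ.orderOf, pow_orderOf_eq_one]
    rw [mem_alternatingGroup, map_zpow, hσ.sign_eq] at hk
    obtain ⟨m, rfl | rfl⟩ := Int.even_or_odd' k
    · simp [zpow_mul, hσ2]
    · simp [zpow_add, zpow_mul] at hk

section TreeCayleyGraph

variable {n : ℕ}

lemma inv_eq_of_mem_treeSwaps {t : Perm (Fin n)} (ht : t ∈ treeSwaps n) : t⁻¹ = t := by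
  obtain ⟨k, hk, rfl⟩ := ht
  obtain ⟨x, y, -, hxy⟩ := treeSwap_isSwap hk
  rw [hxy, swap_inv]

lemma twist_mul_self (b : Bool) : twist n b * twist n b = 1 := by
  cases b
  · simp [twist]
  · by_cases h : 0 < n ∧ 2 < n
    · simp [twist, swapNat_eq h.1 h.2]
    · simp [twist, swapNat, h]

lemma twist_inv (b : Bool) : (twist n b)⁻¹ = twist n b :=
  inv_eq_of_mul_eq_one_left (twist_mul_self b)

lemma twist_mul_treeSwap_mul_twist_of_three_le (b : Bool) {k : ℕ} (hk : 3 ≤ k) (hkn : k < n) :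
    twist n b * treeSwap n k * twist n b = treeSwap n k := by
  rw [twist_mul_treeSwap_mul_twist (by omega) b ⟨by omega, hkn⟩]
  cases b
  · rfl
  · rw [if_pos rfl, swap_apply_of_ne_of_ne (by omega) (by omega)]

lemma twist_mem_normalizer (hn : 4 ≤ n) (b : Bool) : twist n b ∈ normalizer (treeSwaps n) := by
  have hmaps : ∀ t ∈ treeSwaps n, twist n b * t * twist n b ∈ treeSwaps n := by
    rintro _ ⟨k, hk, rfl⟩
    rw [twist_mul_treeSwap_mul_twist hn b hk]
    refine ⟨_, ?_, rfl⟩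
    cases b
    · exact hk
    · obtain ⟨hk1, hkn⟩ := hk
      simp only [if_true, Set.mem_Ico, swap_apply_def]
      split_ifs <;> omega
  refine mem_set_normalizer_iff.mpr fun t =>
    ⟨fun ht => by rw [twist_inv]; exact hmaps t ht, fun ht => ?_⟩
  have := hmaps _ ht
  rwa [twist_inv, ← mul_assoc, ← mul_assoc, twist_mul_self, one_mul, mul_assoc, twist_mul_self,
    mul_one] at this

/-- `ψ` permutes `treeSwaps n` preserving commutation, i.e. it acts on the edges of the tree as an
automorphism of their line graph. -/
lemma exists_twist_of_mem_dAut (hn : 5 ≤ n) {ψ : Perm (Perm (Fin n))}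
    (hψ : ψ ∈ dAut (cayAdj (Perm (Fin n)) (treeSwaps n))) (h1 : ψ 1 = 1) :
    ∃ b, ∀ t ∈ treeSwaps n, ψ t = twist n b * t * twist n b := by
  have hmaps : ∀ k, ∃ l, k ∈ Set.Ico 1 n →
      l ∈ Set.Ico 1 n ∧ ψ (treeSwap n k) = treeSwap n l := by
    intro k
    by_cases hk : k ∈ Set.Ico 1 n
    · obtain ⟨l, hl, he⟩ := apply_mem_of_mem_dAut hψ h1 ⟨k, hk, rfl⟩
      exact ⟨l, fun _ => ⟨hl, he.symm⟩⟩
    · exact ⟨0, fun h => absurd h hk⟩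
  choose f hf using hmaps
  have hT : ∀ u ∈ treeSwaps n, u.IsSwap := fun _ ⟨k, hk, hu⟩ => hu ▸ treeSwap_isSwap hk
  have hrigid := treeAdj_rigid hn (f := f) (fun k hk => (hf k hk).1)
    (fun k hk l hl h => treeSwap_injOn hk hl (ψ.injective (by rw [(hf k hk).2, (hf l hl).2, h])))
    (fun k hk l hl => by
      rw [← not_iff_not, ← commute_treeSwap_iff (hf k hk).1 (hf l hl).1, ← (hf k hk).2,
        ← (hf l hl).2, commute_apply_iff hT (fun x : Fin n => treeDepth x % 2 = 1)
          treeSwaps_bipartite hψ h1 ⟨k, hk, rfl⟩ ⟨l, hl, rfl⟩, commute_treeSwap_iff hk hl])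
  rcases hrigid with hid | hsw
  · refine ⟨false, ?_⟩
    rintro _ ⟨k, hk, rfl⟩
    rw [twist_mul_treeSwap_mul_twist (by omega) false hk, (hf k hk).2, hid k hk]
    rfl
  · refine ⟨true, ?_⟩
    rintro _ ⟨k, hk, rfl⟩
    rw [twist_mul_treeSwap_mul_twist (by omega) true hk, (hf k hk).2, hsw k hk]
    rfl

/-- Reading the relations `x * e₃ * x = e₃ * x * e₃` (`x = e₁, e₂`) and `e₁ * eₖ = eₖ * e₁`
(`k ≥ 4`) along the corresponding closed walks shows that the twist chosen at a vertex is the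
same at each of its neighbours. -/
lemma twistChoice_mul_eq (hn : 4 ≤ n) {ψ : Perm (Perm (Fin n))} {β : Perm (Fin n) → Bool}
    (hβ : ∀ g, ∀ t ∈ treeSwaps n, ψ (t * g) = twist n (β g) * t * twist n (β g) * ψ g)
    {t : Perm (Fin n)} (ht : t ∈ treeSwaps n) (g : Perm (Fin n)) : β (t * g) = β g := by
  have hβk : ∀ k, 1 ≤ k → k < n → ∀ g,
      ψ (treeSwap n k * g) = twist n (β g) * treeSwap n k * twist n (β g) * ψ g :=
    fun k hk hkn g => hβ g _ ⟨k, ⟨hk, hkn⟩, rfl⟩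
  have hexagon : ∀ x, (x = 1 ∨ x = 2) → ∀ g,
      β (treeSwap n 3 * (treeSwap n x * g)) = β g ∧ β g = β (treeSwap n 3 * g) := by
    intro x hx g
    have hrel := congrArg ψ (show treeSwap n x * (treeSwap n 3 * (treeSwap n x * g)) =
        treeSwap n 3 * (treeSwap n x * (treeSwap n 3 * g)) by
      simp only [← mul_assoc, treeSwap_braid hn hx])
    simp only [hβk x (by omega) (by omega), hβk 3 (by omega) (by omega),
      twist_mul_treeSwap_mul_twist_of_three_le (n := n) _ le_rfl (by omega)] at hrel
    exact twist_eq_of_hexagon hn hx (mul_right_cancel (b := ψ g)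
      (by simpa only [mul_assoc] using hrel))
  obtain ⟨k, ⟨hk1, hkn⟩, rfl⟩ := ht
  rcases (show k = 1 ∨ k = 2 ∨ k = 3 ∨ 4 ≤ k by omega) with rfl | rfl | rfl | hk4
  · rw [(hexagon 1 (.inl rfl) (treeSwap n 1 * g)).2, (hexagon 1 (.inl rfl) g).1]
  · rw [(hexagon 2 (.inr rfl) (treeSwap n 2 * g)).2, (hexagon 2 (.inr rfl) g).1]
  · exact (hexagon 1 (.inl rfl) g).2.symm
  · have hc1 : Commute (treeSwap n 1) (treeSwap n k) :=
      (commute_treeSwap_iff ⟨le_rfl, by omega⟩ ⟨hk1, hkn⟩).2 (by unfold treeAdj; omega)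
    have hck : Commute (treeSwap n k) (twist n (β g) * treeSwap n 1 * twist n (β g)) :=
      (((commute_twist_treeSwap _ hk4 hkn).symm.mul_right hc1.symm).mul_right
        (commute_twist_treeSwap _ hk4 hkn).symm)
    have hrel := congrArg ψ (show treeSwap n 1 * (treeSwap n k * g) =
        treeSwap n k * (treeSwap n 1 * g) by rw [← mul_assoc, hc1.eq, mul_assoc])
    rw [hβk 1 le_rfl (by omega), hβk k hk1 hkn, hβk k hk1 hkn, hβk 1 le_rfl (by omega),
      twist_mul_treeSwap_mul_twist_of_three_le _ (by omega) hkn,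
      twist_mul_treeSwap_mul_twist_of_three_le _ (by omega) hkn, ← mul_assoc (treeSwap n k),
      hck.eq, mul_assoc, mul_assoc _ (treeSwap n k)] at hrel
    exact twist_eq_of_conj_treeSwap_one_eq hn (mul_right_cancel hrel)

theorem exists_eq_conj_twist (hn : 5 ≤ n) {ψ : Perm (Perm (Fin n))}
    (hψ : ψ ∈ dAut (cayAdj (Perm (Fin n)) (treeSwaps n))) (h1 : ψ 1 = 1) :
    ∃ b, ∀ x, ψ x = twist n b * x * twist n b := by
  have hlocal : ∀ g, ∃ b, ∀ t ∈ treeSwaps n, ψ (t * g) = twist n b * t * twist n b * ψ g := by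
    intro g
    obtain ⟨φ, hφ, hφ1, hφx⟩ := exists_mem_dAut_apply_eq hψ g
    obtain ⟨b, hb⟩ := exists_twist_of_mem_dAut hn hφ hφ1
    exact ⟨b, fun t ht => by rw [← hb t ht, hφx, inv_mul_cancel_right]⟩
  choose β hβ using hlocal
  have hmem : ∀ g, g ∈ closure (treeSwaps n) := fun g => closure_treeSwaps n ▸ mem_top g
  have hconst : ∀ g, β g = β 1 := fun g =>
    closure_induction_left (p := fun g _ => β g = β 1) rfl
      (fun t ht g _ ih => (twistChoice_mul_eq (by omega) hβ ht g).trans ih)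
      (fun t ht g _ ih => by
        rw [inv_eq_of_mem_treeSwaps ht]
        exact (twistChoice_mul_eq (by omega) hβ ht g).trans ih)
      (hmem g)
  refine ⟨β 1, fun x => ?_⟩
  have hstep : ∀ t ∈ treeSwaps n, ∀ g, ψ g = twist n (β 1) * g * twist n (β 1) →
      ψ (t * g) = twist n (β 1) * (t * g) * twist n (β 1) := by
    intro t ht g ih
    rw [hβ g t ht, hconst g, ih]
    simp only [mul_assoc, ← mul_assoc (twist n _) (twist n _), twist_mul_self, one_mul]
  exact closure_induction_left (p := fun g _ => ψ g = twist n (β 1) * g * twist n (β 1))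
    (by rw [h1, mul_one, twist_mul_self])
    (fun t ht g _ ih => hstep t ht g ih)
    (fun t ht g _ ih => by rw [inv_eq_of_mem_treeSwaps ht]; exact hstep t ht g ih)
    (hmem x)

lemma card_stabilizer_dAut (hn : 5 ≤ n) :
    Nat.card (stabilizer (dAut (cayAdj (Perm (Fin n)) (treeSwaps n))) (1 : Perm (Fin n))) = 2 := by
  let F : Bool → stabilizer (dAut (cayAdj (Perm (Fin n)) (treeSwaps n))) (1 : Perm (Fin n)) :=
    fun b => ⟨⟨(MulAut.conj (twist n b)).toEquiv,
      conj_mem_dAut (twist_mem_normalizer (by omega) b)⟩, by simp [Perm.smul_def]⟩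
  have hF : ∀ b x, (F b).1.1 x = twist n b * x * twist n b := fun b x => by
    show twist n b * x * (twist n b)⁻¹ = _
    rw [twist_inv]
  have hbij : Function.Bijective F := by
    refine ⟨fun a b hab => ?_, fun ψ => ?_⟩
    · refine twist_eq_of_conj_treeSwap_one_eq (n := n) (by omega) ?_
      rw [← hF, ← hF, hab]
    · obtain ⟨b, hb⟩ := exists_eq_conj_twist hn ψ.1.2 (mem_stabilizer_iff.mp ψ.2)
      exact ⟨b, Subtype.ext (Subtype.ext (Equiv.ext fun x => by rw [hF, hb]))⟩
  rw [← Nat.card_eq_of_bijective F hbij, Nat.card_eq_fintype_card, Fintype.card_bool]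

lemma exists_regular_le_dAut_treeSwaps (hn : 4 ≤ n) :
    ∃ K : Subgroup (Perm (Perm (Fin n))), K ≤ dAut (cayAdj (Perm (Fin n)) (treeSwaps n)) ∧
      IsRegularSub K ∧ Nonempty (K ≃* alternatingGroup (Fin n) × Multiplicative (ZMod 2)) := by
  have hc : (twist n true).IsSwap :=
    ⟨⟨0, by omega⟩, ⟨2, by omega⟩, by simp [Fin.ext_iff],
      by rw [twist, if_pos rfl, swapNat_eq (by omega) (by omega)]⟩
  obtain ⟨K, hKA, hK, ⟨e⟩⟩ := exists_regular_le_dAut (isComplement'_zpowers_alternatingGroup hc)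
    (zpowers_le.mpr (twist_mem_normalizer hn true))
  exact ⟨K, hKA, hK, ⟨e.trans (MulEquiv.prodCongr (MulEquiv.refl _)
    (mulEquivOfCyclicCardEq (by rw [Nat.card_zpowers, hc.orderOf]; simp)))⟩⟩

lemma treeSwaps_eq (hn : 4 ≤ n) :
    treeSwaps n = {swap ⟨0, by omega⟩ ⟨1, by omega⟩, swap ⟨1, by omega⟩ ⟨2, by omega⟩,
        swap ⟨1, by omega⟩ ⟨3, by omega⟩} ∪
      {σ | ∃ (i : ℕ) (h : i + 1 < n), 3 ≤ i ∧ σ = swap ⟨i, Nat.lt_of_succ_lt h⟩ ⟨i + 1, h⟩} := by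
  ext σ
  simp only [Set.mem_union, Set.mem_insert_iff, Set.mem_singleton_iff, Set.mem_ofPred_eq]
  constructor
  · rintro ⟨k, ⟨hk1, hkn⟩, rfl⟩
    rw [treeSwap_eq hkn]
    rcases (show k = 1 ∨ k = 2 ∨ k = 3 ∨ 4 ≤ k by omega) with rfl | rfl | rfl | hk4
    · exact .inl (.inl rfl)
    · exact .inl (.inr (.inl rfl))
    · exact .inl (.inr (.inr rfl))
    · refine .inr ⟨k - 1, by omega, by omega, ?_⟩
      have := treeParent_cases k
      congr 1 <;> ext <;> simp only <;> omega
  · rintro ((rfl | rfl | rfl) | ⟨i, hi, hi3, rfl⟩)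
    · exact ⟨1, ⟨le_rfl, by omega⟩, treeSwap_eq _⟩
    · exact ⟨2, ⟨by omega, by omega⟩, treeSwap_eq _⟩
    · exact ⟨3, ⟨by omega, by omega⟩, treeSwap_eq _⟩
    · refine ⟨i + 1, ⟨by omega, hi⟩, ?_⟩
      have := treeParent_cases (i + 1)
      rw [treeSwap_eq hi]
      congr 1
      ext
      simp only
      omega

end TreeCayleyGraph

/-- For `n ≥ 5`, the Cayley graph on `Sym(n)` with connection set
`T = {(1 2), (2 3), (2 4)} ∪ {(i i+1) : 4 ≤ i ≤ n-1}` (written here 0-indexed) is a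
Cayley graph of Cayley index 2 whose automorphism group contains a regular subgroup
isomorphic to `Alt(n) × ℤ₂`. -/
theorem stmt_19 (n : ℕ) (hn : 5 ≤ n)
    (T : Set (Equiv.Perm (Fin n)))
    (hT : T = {Equiv.swap ⟨0, by omega⟩ ⟨1, by omega⟩,
        Equiv.swap ⟨1, by omega⟩ ⟨2, by omega⟩,
        Equiv.swap ⟨1, by omega⟩ ⟨3, by omega⟩} ∪
      {σ | ∃ (i : ℕ) (h : i + 1 < n), 3 ≤ i ∧
        σ = Equiv.swap ⟨i, by omega⟩ ⟨i + 1, h⟩}) :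
    (∀ s ∈ T, s⁻¹ ∈ T) ∧ (1 : Equiv.Perm (Fin n)) ∉ T ∧
    (cayleyRR (Equiv.Perm (Fin n)) T).index = 2 ∧
    ∃ K : Subgroup (Equiv.Perm (Equiv.Perm (Fin n))),
      K ≤ dAut (cayAdj (Equiv.Perm (Fin n)) T) ∧ IsRegularSub K ∧
      Nonempty (K ≃* (alternatingGroup (Fin n) × Multiplicative (ZMod 2))) := by
  obtain rfl : T = treeSwaps n := hT.trans (treeSwaps_eq (by omega)).symm
  refine ⟨fun s hs => (inv_eq_of_mem_treeSwaps hs).symm ▸ hs, ?_, ?_,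
    exists_regular_le_dAut_treeSwaps (by omega)⟩
  · rintro ⟨k, hk, h⟩
    have := (treeSwap_isSwap hk).sign_eq
    rw [h, map_one] at this
    exact absurd this (by decide)
  · rw [index_cayleyRR_eq_card_stabilizer, card_stabilizer_dAut hn]
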